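/- arXiv:1201.4459 — 3 statements merged into one kernel-verified Lean document; each statement's English description precedes it below -/
import Mathlib

section
/- The rectangular grid graph R(m,n) has a Hamiltonian cycle if and only if m·n is even and both m > 1 and n > 1. -/
/-- The infinite two-dimensional integer grid graph: vertices are points of `ℤ × ℤ`,
with an edge between two points at distance 1. -/
def GInf : SimpleGraph (ℤ × ℤ) where
  Adj u v := (u.1 - v.1).natAbs + (u.2 - v.2).natAbs = 1
  symm := ⟨by intro u v h; omega⟩
  loopless := ⟨by intro v h; omega⟩

/-- A vertex is white if the sum of its coordinates is even (otherwise it is black). -/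
def White (v : ℤ × ℤ) : Prop := Even (v.1 + v.2)

/-- The vertex set of the rectangular grid graph `R(m,n)`. -/
def RectV (m n : ℕ) : Set (ℤ × ℤ) :=
  {v | 1 ≤ v.1 ∧ v.1 ≤ (m : ℤ) ∧ 1 ≤ v.2 ∧ v.2 ≤ (n : ℤ)}

/-- The rectangular grid graph `R(m,n)`. -/
def R (m n : ℕ) : SimpleGraph (RectV m n) := GInf.induce (RectV m n)
open SimpleGraph Function

namespace SimpleGraph

variable {V W : Type*} [DecidableEq V] {G : SimpleGraph V} {u : V} {p : G.Walk u u}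

lemma Walk.IsHamiltonianCycle.not_subsingleton_neighborSet (hp : p.IsHamiltonianCycle) (v : V) :
    ¬ (G.neighborSet v).Subsingleton := by
  intro hv
  obtain ⟨x, y, hxy, hxy'⟩ :=
    Set.ncard_eq_two.mp (hp.isCycle.ncard_neighborSet_toSubgraph_eq_two (hp.mem_support v))
  have hsub := p.toSubgraph.neighborSet_subset v
  exact hxy (hv (hsub (hxy' ▸ by simp)) (hsub (hxy' ▸ by simp)))

lemma Coloring.even_card_of_isHamiltonianCycle [Fintype V] (c : G.Coloring Bool)
    (hp : p.IsHamiltonianCycle) : Even (Fintype.card V) :=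
  hp.length_eq ▸ (c.even_length_iff_congr p).mpr Iff.rfl

lemma Iso.exists_isHamiltonianCycle [DecidableEq W] {H : SimpleGraph W} (e : G ≃g H)
    (h : ∃ (a : V) (p : G.Walk a a), p.IsHamiltonianCycle) :
    ∃ (b : W) (q : H.Walk b b), q.IsHamiltonianCycle := by
  obtain ⟨a, p, hp⟩ := h
  exact ⟨_, p.map e.toHom, hp.map e.bijective⟩

lemma exists_isHamiltonianCycle_of_injective [Fintype V] {L : ℕ} (hL : 3 ≤ L)
    (hcard : Fintype.card V = L) (f : Fin L → V) (hf : Injective f)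
    (hadj : ∀ i j : Fin L, j.val = (i.val + 1) % L → G.Adj (f i) (f j)) :
    ∃ (a : V) (p : G.Walk a a), p.IsHamiltonianCycle := by
  obtain ⟨k, rfl⟩ : ∃ k, L = k + 3 := ⟨L - 3, by omega⟩
  have hcopy : cycleGraph (k + 3) ⊑ G := by
    refine ⟨⟨⟨f, fun {i j} hij => ?_⟩, hf⟩⟩
    rcases cycleGraph_adj.mp hij with h | h
    · exact (hadj j i (by rw [eq_add_of_sub_eq' h, Fin.val_add, Fin.val_one])).symm
    · exact hadj i j (by rw [eq_add_of_sub_eq' h, Fin.val_add, Fin.val_one])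
  obtain ⟨a, p, hcyc, hlen⟩ := (cycleGraph_isContained_iff (by omega)).mp hcopy
  exact ⟨a, p, Walk.isHamiltonianCycle_iff_isCycle_and_length_eq.mpr ⟨hcyc, hlen.trans hcard.symm⟩⟩

end SimpleGraph

lemma gInf_adj {u v : ℤ × ℤ} : GInf.Adj u v ↔ (u.1 - v.1).natAbs + (u.2 - v.2).natAbs = 1 :=
  Iff.rfl

instance : DecidablePred White := fun v => inferInstanceAs (Decidable (Even (v.1 + v.2)))

lemma R_adj {m n : ℕ} {u v : RectV m n} : (R m n).Adj u v ↔ GInf.Adj u v := Iff.rfl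

def whiteColoring : GInf.Coloring Bool :=
  Coloring.mk (fun v => decide (White v)) fun {u v} huv => by
    rw [gInf_adj] at huv
    simp only [White, ne_eq, decide_eq_decide, Int.even_iff]
    omega

noncomputable instance RectV.fintype (m n : ℕ) : Fintype (RectV m n) :=
  Fintype.ofFinset (Finset.Icc 1 (m : ℤ) ×ˢ Finset.Icc 1 (n : ℤ)) fun v => by
    simp [RectV, and_assoc]

lemma card_rectV (m n : ℕ) : Fintype.card (RectV m n) = m * n :=
  (Fintype.card_ofFinset _ _).trans (by simp)

def rectTranspose (m n : ℕ) : R m n ≃g R n m where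
  toFun v := ⟨v.1.swap, v.2.2.2.1, v.2.2.2.2, v.2.1, v.2.2.1⟩
  invFun v := ⟨v.1.swap, v.2.2.2.1, v.2.2.2.2, v.2.1, v.2.2.1⟩
  left_inv _ := rfl
  right_inv _ := rfl
  map_rel_iff' {u v} := by
    simp only [R_adj, gInf_adj, Equiv.coe_fn_mk, Prod.fst_swap, Prod.snd_swap]
    omega

lemma R_neighborSet_subsingleton {m n : ℕ} (h : m ≤ 1 ∨ n ≤ 1) (v : RectV m n)
    (hv : (v : ℤ × ℤ) = (1, 1)) : ((R m n).neighborSet v).Subsingleton := by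
  rintro ⟨⟨x, y⟩, hx₁, hx₂, hy₁, hy₂⟩ hxy ⟨⟨x', y'⟩, hx₁', hx₂', hy₁', hy₂'⟩ hxy'
  simp only [mem_neighborSet, R_adj, gInf_adj, hv] at hxy hxy'
  ext <;> simp only <;> omega

/-- Position at time `t` of the snake: column `q + 1` is visited during the times
`(n - 1) * q + r`, `r < n - 1`, upwards if `q` is even and downwards otherwise; from time
`m * (n - 1)` on, row `1` is traversed from `x = m` back to `x = 1`. -/
def snake (m n t : ℕ) : ℤ × ℤ :=
  if t < m * (n - 1) then
    (((t / (n - 1) : ℕ) : ℤ) + 1,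
      if t / (n - 1) % 2 = 0 then ((t % (n - 1) : ℕ) : ℤ) + 2 else n - ((t % (n - 1) : ℕ) : ℤ))
  else ((m * n : ℕ) - (t : ℤ), 1)

section snake

variable {m n : ℕ}

lemma mul_sub_one_add_self (hn : 1 ≤ n) : m * (n - 1) + m = m * n := by
  rw [← Nat.mul_add_one, Nat.sub_add_cancel hn]

lemma snake_column {q r : ℕ} (hq : q < m) (hr : r < n - 1) :
    snake m n ((n - 1) * q + r) = ((q : ℤ) + 1, if q % 2 = 0 then (r : ℤ) + 2 else n - r) := by
  have hdiv : ((n - 1) * q + r) / (n - 1) = q := by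
    rw [Nat.mul_add_div (by omega), Nat.div_eq_of_lt hr, add_zero]
  have hmod : ((n - 1) * q + r) % (n - 1) = r := by
    rw [Nat.mul_add_mod, Nat.mod_eq_of_lt hr]
  have hlt : (n - 1) * q + r < m * (n - 1) := by
    nlinarith
  simp only [snake, if_pos hlt, hdiv, hmod]

lemma snake_bottom {b : ℕ} (hn : 1 ≤ n) :
    snake m n (m * (n - 1) + b) = ((m : ℤ) - b, 1) := by
  simp only [snake, if_neg (Nat.not_lt.mpr (Nat.le_add_right _ _)), ← mul_sub_one_add_self hn]
  push_cast
  ring_nf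

lemma snake_cases (hn : 1 < n) {t : ℕ} (ht : t < m * n) :
    (∃ q r, q < m ∧ r < n - 1 ∧ t = (n - 1) * q + r) ∨ ∃ b < m, t = m * (n - 1) + b := by
  have hmn := mul_sub_one_add_self (m := m) hn.le
  rcases lt_or_ge t (m * (n - 1)) with h | h
  · refine Or.inl ⟨t / (n - 1), t % (n - 1), ?_, Nat.mod_lt _ (by omega), (Nat.div_add_mod _ _).symm⟩
    exact Nat.div_lt_of_lt_mul (by rwa [mul_comm])
  · exact Or.inr ⟨t - m * (n - 1), by omega, by omega⟩

lemma snake_mem (hn : 1 < n) {t : ℕ} (ht : t < m * n) : snake m n t ∈ RectV m n := by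
  rcases snake_cases hn ht with ⟨q, r, hq, hr, rfl⟩ | ⟨b, hb, rfl⟩
  · rw [snake_column hq hr]
    simp only [RectV, Set.mem_ofPred_eq]
    split_ifs <;> omega
  · rw [snake_bottom hn.le]
    simp only [RectV, Set.mem_ofPred_eq]
    omega

lemma snake_adj_succ (hm : Even m) (hn : 1 < n) {t : ℕ} (ht : t + 1 < m * n) :
    GInf.Adj (snake m n t) (snake m n (t + 1)) := by
  have hm2 : m % 2 = 0 := Nat.even_iff.mp hm
  rcases snake_cases hn (Nat.lt_of_succ_lt ht) with ⟨q, r, hq, hr, rfl⟩ | ⟨b, hb, rfl⟩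
  · rw [snake_column hq hr, gInf_adj]
    by_cases hr' : r + 1 < n - 1
    · rw [add_assoc, snake_column hq hr']
      split_ifs <;> omega
    replace hr' : r + 1 = n - 1 := by omega
    by_cases hq' : q + 1 < m
    · have : (n - 1) * q + r + 1 = (n - 1) * (q + 1) + 0 := by
        rw [add_assoc, hr']; ring
      rw [this, snake_column hq' (by omega)]
      split_ifs <;> omega
    · -- `m` is even, so the last column is traversed downwards and ends at `(m, 2)`.
      have : (n - 1) * q + r + 1 = m * (n - 1) + 0 := by
        rw [add_assoc, hr', ← show q + 1 = m by omega]; ring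
      rw [this, snake_bottom hn.le]
      split_ifs <;> omega
  · have hmn := mul_sub_one_add_self (m := m) hn.le
    rw [add_assoc, snake_bottom hn.le, snake_bottom hn.le, gInf_adj]
    omega

lemma snake_adj_last (hm : 0 < m) (hn : 1 < n) :
    GInf.Adj (snake m n (m * n - 1)) (snake m n 0) := by
  have hlast : m * n - 1 = m * (n - 1) + (m - 1) := by
    have := mul_sub_one_add_self (m := m) hn.le
    omega
  rw [hlast, snake_bottom hn.le, show 0 = (n - 1) * 0 + 0 from rfl, snake_column hm (by omega),
    gInf_adj]
  split_ifs <;> omega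

lemma snake_injOn (hn : 1 < n) : Set.InjOn (snake m n) (Set.Iio (m * n)) := by
  intro t ht t' ht' h
  rcases snake_cases hn ht with ⟨q, r, hq, hr, rfl⟩ | ⟨b, hb, rfl⟩ <;>
    rcases snake_cases hn ht' with ⟨q', r', hq', hr', rfl⟩ | ⟨b', hb', rfl⟩
  · rw [snake_column hq hr, snake_column hq' hr', Prod.mk.injEq] at h
    obtain rfl : q = q' := by omega
    split_ifs at h <;> omega
  · rw [snake_column hq hr, snake_bottom hn.le, Prod.mk.injEq] at h
    split_ifs at h <;> omega
  · rw [snake_column hq' hr', snake_bottom hn.le, Prod.mk.injEq] at h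
    split_ifs at h <;> omega
  · rw [snake_bottom hn.le, snake_bottom hn.le, Prod.mk.injEq] at h
    omega

end snake

lemma exists_isHamiltonianCycle_R_of_even_left {m n : ℕ} (hm : Even m) (hm1 : 1 < m) (hn : 1 < n) :
    ∃ (a : RectV m n) (p : (R m n).Walk a a), p.IsHamiltonianCycle := by
  have hmn : 4 ≤ m * n := Nat.mul_le_mul hm1 hn
  refine exists_isHamiltonianCycle_of_injective (by omega) (card_rectV m n)
    (fun i => ⟨snake m n i, snake_mem hn i.2⟩) ?_ ?_
  · intro i j h
    exact Fin.ext (snake_injOn hn i.2 j.2 (congrArg Subtype.val h))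
  · intro i j hij
    change GInf.Adj (snake m n i) (snake m n j)
    by_cases hi : i.val + 1 < m * n
    · rw [hij, Nat.mod_eq_of_lt hi]
      exact snake_adj_succ hm hn hi
    · rw [hij, show i.val = m * n - 1 by omega, Nat.sub_add_cancel (by omega), Nat.mod_self]
      exact snake_adj_last (by omega) hn

/-- `R(m,n)` has a Hamiltonian cycle iff m·n is even and m > 1 and n > 1. -/
theorem ham_cycle_iff (m n : ℕ) :
    (∃ (a : RectV m n) (p : (R m n).Walk a a), p.IsHamiltonianCycle) ↔
      (Even (m * n) ∧ 1 < m ∧ 1 < n) := by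
  constructor
  · rintro ⟨a, p, hp⟩
    obtain ⟨hx₁, hx₂, hy₁, hy₂⟩ := a.2
    have hcard : Even (Fintype.card (RectV m n)) :=
      Coloring.even_card_of_isHamiltonianCycle (whiteColoring.comp (Embedding.induce _).toHom) hp
    refine ⟨card_rectV m n ▸ hcard, ?_⟩
    by_contra h
    exact hp.not_subsingleton_neighborSet ⟨(1, 1), le_rfl, by omega, le_rfl, by omega⟩
      (R_neighborSet_subsingleton (by omega) _ rfl)
  · rintro ⟨he, hm, hn⟩
    rcases Nat.even_mul.mp he with h | h
    · exact exists_isHamiltonianCycle_R_of_even_left h hm hn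
    · exact (rectTranspose n m).exists_isHamiltonianCycle
        (exists_isHamiltonianCycle_R_of_even_left h hn hm)
end

section
/- In the 2-rectangle R(m,2) with m ≥ 2, if s and t are adjacent vertices and the edge (s,t) is not on the outer boundary (i.e., (s,t) is a vertical edge with 1 < s_x = t_x < m), then there is no Hamiltonian path between s and t. -/
/-!
Columns `x - 1` and `x + 1` of `R(m,2)` are separated by column `x`, whose only vertices are
the endpoints `s` and `t`. A Hamiltonian path from `s` to `t` visits `(x - 1, 1)` and `(x + 1, 1)`,
and since the first coordinate changes by at most one along each edge, it must pass through
column `x` strictly between these two visits, i.e. at an interior vertex of the path.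
-/

namespace SimpleGraph.Walk

variable {V : Type*} {G : SimpleGraph V} {u v : V}

theorem exists_getVert_eq (f : V → ℤ) (hf : ∀ ⦃a b⦄, G.Adj a b → f b ≤ f a + 1)
    (p : G.Walk u v) (i j : ℕ) {c : ℤ} (hc : min (f (p.getVert i)) (f (p.getVert j)) ≤ c)
    (hc' : c ≤ max (f (p.getVert i)) (f (p.getVert j))) :
    ∃ k, min i j ≤ k ∧ k ≤ max i j ∧ f (p.getVert k) = c := by
  wlog hij : i ≤ j generalizing i j
  · obtain ⟨k, hk⟩ := this j i (by rwa [min_comm]) (by rwa [max_comm]) (by omega)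
    exact ⟨k, by rwa [min_comm, max_comm]⟩
  have step : ∀ k, f (p.getVert (k + 1)) ≤ f (p.getVert k) + 1 ∧
      f (p.getVert k) ≤ f (p.getVert (k + 1)) + 1 := by
    intro k
    rcases lt_or_ge k p.length with hk | hk
    · exact ⟨hf (p.adj_getVert_succ hk), hf (p.adj_getVert_succ hk).symm⟩
    · rw [p.getVert_of_length_le hk, p.getVert_of_length_le (by omega)]
      omega
  induction j, hij using Nat.le_induction with
  | base => exact ⟨i, by omega, by omega, by omega⟩
  | succ j hij ih =>
    by_cases hcj : min (f (p.getVert i)) (f (p.getVert j)) ≤ c ∧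
        c ≤ max (f (p.getVert i)) (f (p.getVert j))
    · obtain ⟨k, hk, hk', hfk⟩ := ih hcj.1 hcj.2
      exact ⟨k, by omega, by omega, hfk⟩
    · have := step j
      exact ⟨j + 1, by omega, by omega, by omega⟩

end SimpleGraph.Walk

open SimpleGraph

theorem R_adj_fst_le {m n : ℕ} {u v : RectV m n} (h : (R m n).Adj u v) :
    (v : ℤ × ℤ).1 ≤ (u : ℤ × ℤ).1 + 1 := by
  have h' : GInf.Adj u v := h
  simp only [GInf] at h'
  omega

theorem RectV.mem_two_iff {m : ℕ} {a b : ℤ} :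
    (a, b) ∈ RectV m 2 ↔ 1 ≤ a ∧ a ≤ m ∧ (b = 1 ∨ b = 2) := by
  simp only [RectV, Set.mem_ofPred_eq, Nat.cast_ofNat]
  omega

theorem RectV.eq_or_eq_of_fst_eq {m : ℕ} {x : ℤ} (hs : (x, (1 : ℤ)) ∈ RectV m 2)
    (ht : (x, (2 : ℤ)) ∈ RectV m 2) (v : RectV m 2) (hv : (v : ℤ × ℤ).1 = x) :
    v = ⟨(x, 1), hs⟩ ∨ v = ⟨(x, 2), ht⟩ := by
  obtain ⟨⟨a, b⟩, hab⟩ := v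
  obtain rfl : a = x := hv
  rcases (RectV.mem_two_iff.mp hab).2.2 with rfl | rfl <;> simp

theorem no_ham_path_nonboundary_edge_general (m : ℕ) (x : ℤ)
    (hx1 : 1 < x) (hxm : x < m)
    (hs : ((x, (1 : ℤ))) ∈ RectV m 2) (ht : ((x, (2 : ℤ))) ∈ RectV m 2)
    (p : (R m 2).Walk ⟨(x, 1), hs⟩ ⟨(x, 2), ht⟩) : ¬ p.IsHamiltonian := by
  intro hp
  have hl : (x - 1, (1 : ℤ)) ∈ RectV m 2 := RectV.mem_two_iff.mpr (by omega)
  have hr : (x + 1, (1 : ℤ)) ∈ RectV m 2 := RectV.mem_two_iff.mpr (by omega)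
  obtain ⟨i, hi, hil⟩ := Walk.mem_support_iff_exists_getVert.mp (hp.mem_support ⟨_, hl⟩)
  obtain ⟨j, hj, hjl⟩ := Walk.mem_support_iff_exists_getVert.mp (hp.mem_support ⟨_, hr⟩)
  obtain ⟨k, hk_ge, hk_le, hk⟩ := p.exists_getVert_eq (fun v : RectV m 2 ↦ (v : ℤ × ℤ).1)
    (fun _ _ h ↦ R_adj_fst_le h) i j (c := x) (by simp [hi, hj]) (by simp [hi, hj])
  have hki : k ≠ i := by rintro rfl; simp [hi] at hk
  have hkj : k ≠ j := by rintro rfl; simp [hj] at hk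
  rcases RectV.eq_or_eq_of_fst_eq hs ht _ hk with hks | hkt
  · have := (hp.isPath.getVert_eq_start_iff (by omega)).mp hks
    omega
  · have := (hp.isPath.getVert_eq_end_iff (by omega)).mp hkt
    omega

/-- In `R(m,2)` (m ≥ 2), if (s,t) is a nonboundary vertical edge
(s = (x,1), t = (x,2) with 1 < x < m), there is no Hamiltonian path from s to t. -/
theorem no_ham_path_nonboundary_edge (m : ℕ) (hm : 2 ≤ m) (x : ℤ)
    (hx1 : 1 < x) (hxm : x < m)
    (hs : ((x, (1 : ℤ))) ∈ RectV m 2) (ht : ((x, (2 : ℤ))) ∈ RectV m 2)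
    (p : (R m 2).Walk ⟨(x, 1), hs⟩ ⟨(x, 2), ht⟩) : ¬ p.IsHamiltonian :=
  no_ham_path_nonboundary_edge_general m x hx1 hxm hs ht p
end

section
/- In the 2-rectangle R(m,2), if s = (s_x,1) and t = (t_x,2) with s_x = t_x and 1 < s_x < m (removing s and t disconnects the graph), then the maximum number of vertices of a path from s to t equals max(s_x + t_x, 2m − s_x − t_x + 2). -/
namespace SimpleGraph.Walk

variable {V : Type*} {G : SimpleGraph V} {u v : V}

lemma support_eq_cons_support_tail_dropLast_append {p : G.Walk u v} (hp : ¬p.Nil)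
    (hp' : ¬p.tail.Nil) : p.support = u :: (p.tail.dropLast.support ++ [v]) := by
  rw [support_dropLast_concat hp', cons_support_tail hp]

theorem forall_lt_or_forall_gt_of_forall_ne (f : V → ℤ) (hf : ∀ x y, G.Adj x y → f x ≤ f y + 1)
    {a : ℤ} (p : G.Walk u v) (hp : ∀ w ∈ p.support, f w ≠ a) :
    (∀ w ∈ p.support, f w < a) ∨ (∀ w ∈ p.support, a < f w) := by
  induction p with
  | nil => simpa using hp _ (start_mem_support _)
  | @cons x y _ hxy q ih =>
    have hx := hp x (start_mem_support _)
    have hy := q.start_mem_support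
    have := hf x y hxy
    have := hf y x hxy.symm
    simp only [support_cons, List.mem_cons, forall_eq_or_imp] at hp ⊢
    rcases ih hp.2 with hq | hq
    · exact .inl ⟨by grind, hq⟩
    · exact .inr ⟨by grind, hq⟩

end SimpleGraph.Walk

open SimpleGraph

namespace R

variable {m n : ℕ}

lemma adj_iff {u v : RectV m n} :
    (R m n).Adj u v ↔ (u.1.1 - v.1.1).natAbs + (u.1.2 - v.1.2).natAbs = 1 := Iff.rfl

lemma fst_le_fst_add_one_of_adj {u v : RectV m n} (h : (R m n).Adj u v) : u.1.1 ≤ v.1.1 + 1 := by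
  rw [adj_iff] at h
  omega

def reflect (m n : ℕ) : R m n ≃g R m n where
  toFun v := ⟨(m + 1 - v.1.1, v.1.2), by obtain ⟨_, _, _, _⟩ := v.2; constructor <;> omega⟩
  invFun v := ⟨(m + 1 - v.1.1, v.1.2), by obtain ⟨_, _, _, _⟩ := v.2; constructor <;> omega⟩
  left_inv v := by simp
  right_inv v := by simp
  map_rel_iff' := by
    intro u v
    simp only [Equiv.coe_fn_mk, adj_iff]
    omega

lemma length_le_of_nodup_of_fst_mem_Icc {l : List (RectV m n)} (hl : l.Nodup) {lo hi : ℤ}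
    (h : ∀ w ∈ l, lo ≤ w.1.1 ∧ w.1.1 ≤ hi) : l.length ≤ (hi + 1 - lo).toNat * n := by
  calc l.length = (l.map Subtype.val).toFinset.card := by
        rw [List.toFinset_card_of_nodup (hl.map Subtype.val_injective), List.length_map]
    _ ≤ (Finset.Icc lo hi ×ˢ Finset.Icc 1 (n : ℤ)).card := by
        refine Finset.card_le_card fun x hx => ?_
        obtain ⟨w, hw, rfl⟩ := List.mem_map.1 (List.mem_toFinset.1 hx)
        obtain ⟨-, -, _, _⟩ := w.2
        simp only [Finset.mem_product, Finset.mem_Icc]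
        exact ⟨h w hw, by assumption, by assumption⟩
    _ = (hi + 1 - lo).toNat * n := by simp [Int.card_Icc]

variable {a : ℤ} {s t : RectV m 2}

lemma eq_or_eq_of_fst_eq (hs : s.1 = (a, 1)) (ht : t.1 = (a, 2)) {w : RectV m 2}
    (hw : w.1.1 = a) : w = s ∨ w = t := by
  obtain ⟨-, -, _, _⟩ := w.2
  rcases (by omega : w.1.2 = 1 ∨ w.1.2 = 2) with h | h
  · exact .inl (Subtype.ext (by rw [hs, Prod.ext_iff]; exact ⟨hw, h⟩))
  · exact .inr (Subtype.ext (by rw [ht, Prod.ext_iff]; exact ⟨hw, h⟩))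

theorem length_support_le (hs : s.1 = (a, 1)) (ht : t.1 = (a, 2)) {p : (R m 2).Walk s t}
    (hp : p.IsPath) : (p.support.length : ℤ) ≤ max (2 * a) (2 * (m - a) + 2) := by
  obtain ⟨ha, ha', -⟩ : ((a, (1 : ℤ))) ∈ RectV m 2 := hs ▸ s.2
  by_cases hp₁ : p.Nil
  · rw [p.length_support, Walk.length_eq_zero_iff.2 hp₁]
    omega
  by_cases hp₂ : p.tail.Nil
  · rw [p.length_support, ← Walk.length_tail_add_one hp₁, Walk.length_eq_zero_iff.2 hp₂]
    omega
  set r := p.tail.dropLast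
  have hsupp : p.support = s :: (r.support ++ [t]) :=
    Walk.support_eq_cons_support_tail_dropLast_append hp₁ hp₂
  have hnodup := hp.support_nodup
  rw [hsupp] at hnodup
  obtain ⟨hs_r, hnd⟩ := List.nodup_cons.1 hnodup
  obtain ⟨hr, -, hdisj⟩ := List.nodup_append.1 hnd
  have hcol : ∀ w ∈ r.support, w.1.1 ≠ a := fun w hw hwa => by
    rcases eq_or_eq_of_fst_eq hs ht hwa with rfl | rfl
    exacts [hs_r (List.mem_append_left _ hw), hdisj w hw w (List.mem_singleton_self _) rfl]
  rw [hsupp, List.length_cons, List.length_append, List.length_singleton]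
  rcases r.forall_lt_or_forall_gt_of_forall_ne (fun w => w.1.1)
    (fun _ _ => fst_le_fst_add_one_of_adj) hcol with hL | hR
  · have := length_le_of_nodup_of_fst_mem_Icc hr (lo := 1) (hi := a - 1) fun w hw =>
      ⟨w.2.1, by have := hL w hw; omega⟩
    omega
  · have := length_le_of_nodup_of_fst_mem_Icc hr (lo := a + 1) (hi := m) fun w hw =>
      ⟨by have := hR w hw; omega, w.2.2.1⟩
    omega

theorem exists_isPath_left (ha : 1 ≤ a) :
    ∀ (hs : ((a, (1 : ℤ))) ∈ RectV m 2) (ht : ((a, (2 : ℤ))) ∈ RectV m 2),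
    ∃ p : (R m 2).Walk ⟨_, hs⟩ ⟨_, ht⟩,
      p.IsPath ∧ (p.support.length : ℤ) = 2 * a ∧ ∀ w ∈ p.support, w.1.1 ≤ a := by
  induction a, ha using Int.leInduction with
  | base =>
    refine fun hs ht => ⟨.cons (adj_iff.2 (by simp)) .nil, by simp, rfl, ?_⟩
    simp
  | succ a ha ih =>
    intro hs ht
    have hs' : ((a, (1 : ℤ))) ∈ RectV m 2 := ⟨ha, by linarith [hs.2.1], by simp, by simp⟩
    have ht' : ((a, (2 : ℤ))) ∈ RectV m 2 := ⟨ha, by linarith [hs.2.1], by simp, by simp⟩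
    obtain ⟨p, hp, hlen, hleft⟩ := ih hs' ht'
    have hbot : (R m 2).Adj ⟨_, hs⟩ ⟨_, hs'⟩ := adj_iff.2 (by simp)
    have htop : (R m 2).Adj ⟨_, ht'⟩ ⟨_, ht⟩ := adj_iff.2 (by simp)
    have hs_p : ⟨_, hs⟩ ∉ p.support := fun h => by simpa using hleft _ h
    have ht_p : ⟨_, ht⟩ ∉ p.support := fun h => by simpa using hleft _ h
    refine ⟨.cons hbot (p.concat htop), (hp.concat ht_p htop).cons ?_, ?_, ?_⟩
    · simpa [Walk.support_concat] using hs_p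
    · rw [Walk.support_cons, Walk.support_concat, List.length_cons, List.length_append,
        List.length_singleton]
      push_cast
      linarith
    · simp only [Walk.support_cons, Walk.support_concat, List.mem_cons, List.mem_append,
        List.not_mem_nil, or_false]
      rintro w (rfl | h | rfl)
      · simp
      · linarith [hleft w h]
      · simp

theorem exists_isPath_right (hs : ((a, (1 : ℤ))) ∈ RectV m 2) (ht : ((a, (2 : ℤ))) ∈ RectV m 2) :
    ∃ p : (R m 2).Walk ⟨_, hs⟩ ⟨_, ht⟩,
      p.IsPath ∧ (p.support.length : ℤ) = 2 * (m - a) + 2 := by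
  obtain ⟨_, _, _, _⟩ := hs
  obtain ⟨p, hp, hlen, -⟩ := exists_isPath_left (a := m + 1 - a) (m := m) (by omega)
    ⟨by omega, by omega, by simp, by simp⟩ ⟨by omega, by omega, by simp, by simp⟩
  refine ⟨(p.map (reflect m 2).toHom).copy (Subtype.ext ?_) (Subtype.ext ?_),
    (Walk.isPath_copy _ _ _).2 (hp.map (f := (reflect m 2).toHom) (reflect m 2).injective), ?_⟩
  · simp [reflect]
  · simp [reflect]
  · rw [Walk.support_copy, Walk.support_map, List.length_map, hlen]
    ring

end R

theorem longest_path_two_rectangle_split_general (m : ℕ) (sx tx : ℤ) (heq : sx = tx)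
    (hs : ((sx, (1 : ℤ))) ∈ RectV m 2) (ht : ((tx, (2 : ℤ))) ∈ RectV m 2) :
    IsGreatest {k : ℤ | ∃ p : (R m 2).Walk ⟨(sx, 1), hs⟩ ⟨(tx, 2), ht⟩,
        p.IsPath ∧ (p.support.length : ℤ) = k}
      (max (sx + tx) (2 * (m : ℤ) - sx - tx + 2)) := by
  subst heq
  have hmax : max (sx + sx) (2 * (m : ℤ) - sx - sx + 2) = max (2 * sx) (2 * (m - sx) + 2) := by
    congr 1 <;> ring
  rw [hmax]
  refine ⟨?_, fun _ ⟨p, hp, hlen⟩ => hlen ▸ R.length_support_le rfl rfl hp⟩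
  obtain ⟨pL, hpL, hL, -⟩ := R.exists_isPath_left hs.1 hs ht
  obtain ⟨pR, hpR, hR⟩ := R.exists_isPath_right hs ht
  rcases max_choice (2 * sx) (2 * (m - sx) + 2) with h | h
  · exact ⟨pL, hpL, hL.trans h.symm⟩
  · exact ⟨pR, hpR, hR.trans h.symm⟩

/-- In `R(m,2)`, for s = (sx,1) and t = (tx,2) with sx = tx and 1 < sx < m,
the maximum number of vertices of a path from s to t equals
max(sx + tx, 2m − sx − tx + 2). -/
theorem longest_path_two_rectangle_split (m : ℕ) (sx tx : ℤ) (heq : sx = tx)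
    (h1 : 1 < sx) (h2 : sx < m)
    (hs : ((sx, (1 : ℤ))) ∈ RectV m 2) (ht : ((tx, (2 : ℤ))) ∈ RectV m 2) :
    IsGreatest {k : ℤ | ∃ p : (R m 2).Walk ⟨(sx, 1), hs⟩ ⟨(tx, 2), ht⟩,
        p.IsPath ∧ (p.support.length : ℤ) = k}
      (max (sx + tx) (2 * (m : ℤ) - sx - tx + 2)) :=
  longest_path_two_rectangle_split_general m sx tx heq hs ht
end
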